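/- arXiv:2405.05246 — 2 statements merged into one kernel-verified Lean document; each statement's English description precedes it below -/
import Mathlib

section
/- Assume (A0). If 𝒱 is non-empty, then v_0 ∈ 𝒱 and v_0 = inf 𝒱. -/
open Finset Filter Topology MeasureTheory
open scoped ENNReal

/-- `alphaSeq a b k = (a_1 ⋯ a_k)/(b_1 ⋯ b_k)`, with `alphaSeq a b 0 = 1`. -/
noncomputable def alphaSeq (a b : ℕ → ℝ) (k : ℕ) : ℝ :=
  ∏ i ∈ Finset.Icc 1 k, (a i / b i)

/-- `betaSeq a b k = 1/b_k + a_k/(b_k b_{k-1}) + ⋯ + (a_k ⋯ a_2)/(b_k ⋯ b_1)`,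
with `betaSeq a b 0 = 0`. -/
noncomputable def betaSeq (a b : ℕ → ℝ) (k : ℕ) : ℝ :=
  ∑ j ∈ Finset.Icc 1 k, (∏ i ∈ Finset.Icc (j+1) k, a i) / (∏ i ∈ Finset.Icc j k, b i)

/-- The stable traffic equation: `ρ 0 = 1` and
`(b_i + a_{i+1}) ρ_i = a_i ρ_{i-1} + b_{i+1} ρ_{i+1}` for all `i ≥ 1`. -/
def IsSTE (a b : ℕ → ℝ) (ρ : ℕ → ℝ) : Prop :=
  ρ 0 = 1 ∧ ∀ i, 1 ≤ i → (b i + a (i+1)) * ρ i = a i * ρ (i-1) + b (i+1) * ρ (i+1)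

/-- An admissible solution of the stable traffic equation: moreover `ρ k ∈ (0,1)` for `k ≥ 1`. -/
def IsAdmissible (a b : ℕ → ℝ) (ρ : ℕ → ℝ) : Prop :=
  IsSTE a b ρ ∧ ∀ k, 1 ≤ k → ρ k ∈ Set.Ioo (0:ℝ) 1

/-- The set `𝒱` of `v` such that `α + v β` is an admissible solution. -/
def speedSet (a b : ℕ → ℝ) : Set ℝ :=
  {v : ℝ | IsAdmissible a b (fun k => alphaSeq a b k + v * betaSeq a b k)}


lemma alpha_succ (a b : ℕ → ℝ) (k : ℕ) :
    alphaSeq a b (k+1) = alphaSeq a b k * (a (k+1) / b (k+1)) := by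
  unfold alphaSeq
  rw [Finset.prod_Icc_succ_top (by omega : 1 ≤ k+1)]

lemma beta_succ (a b : ℕ → ℝ) (k : ℕ) :
    betaSeq a b (k+1) = betaSeq a b k * (a (k+1) / b (k+1)) + 1 / b (k+1) := by
  unfold betaSeq
  rw [Finset.sum_Icc_succ_top (by omega : 1 ≤ k+1)]
  have h1 : Finset.Icc (k+1+1) (k+1) = ∅ := by
    rw [Finset.Icc_eq_empty_iff]; omega
  rw [h1, Finset.prod_empty, Finset.Icc_self, Finset.prod_singleton, Finset.sum_mul]
  congr 1
  apply Finset.sum_congr rfl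
  intro j hj
  simp only [Finset.mem_Icc] at hj
  rw [Finset.prod_Icc_succ_top (by omega : j+1 ≤ k+1),
      Finset.prod_Icc_succ_top (by omega : j ≤ k+1), div_mul_div_comm]

lemma alpha_pos (a b : ℕ → ℝ) (ha : ∀ k, 1 ≤ k → 0 < a k) (hb : ∀ k, 1 ≤ k → 0 < b k)
    (k : ℕ) : 0 < alphaSeq a b k := by
  apply Finset.prod_pos
  intro i hi
  simp only [Finset.mem_Icc] at hi
  exact div_pos (ha i hi.1) (hb i hi.1)

lemma beta_nonneg (a b : ℕ → ℝ) (ha : ∀ k, 1 ≤ k → 0 < a k) (hb : ∀ k, 1 ≤ k → 0 < b k)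
    (k : ℕ) : 0 ≤ betaSeq a b k := by
  induction k with
  | zero => simp [betaSeq]
  | succ n ih =>
    rw [beta_succ]
    have := ha (n+1) (by omega)
    have := hb (n+1) (by omega)
    positivity

lemma beta_pos (a b : ℕ → ℝ) (ha : ∀ k, 1 ≤ k → 0 < a k) (hb : ∀ k, 1 ≤ k → 0 < b k)
    (k : ℕ) (hk : 1 ≤ k) : 0 < betaSeq a b k := by
  obtain ⟨m, rfl⟩ : ∃ m, k = m + 1 := ⟨k - 1, by omega⟩
  rw [beta_succ]
  have h1 := ha (m+1) (by omega)
  have h2 := hb (m+1) (by omega)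
  have h3 := beta_nonneg a b ha hb m
  positivity

lemma ste_any (a b : ℕ → ℝ) (hb : ∀ k, 1 ≤ k → 0 < b k) (v : ℝ) :
    IsSTE a b (fun k => alphaSeq a b k + v * betaSeq a b k) := by
  constructor
  · simp [alphaSeq, betaSeq]
  · intro i hi
    obtain ⟨m, rfl⟩ : ∃ m, i = m + 1 := ⟨i - 1, by omega⟩
    have hb1 : b (m+1) ≠ 0 := (hb (m+1) (by omega)).ne'
    have hb2 : b (m+2) ≠ 0 := (hb (m+2) (by omega)).ne'
    simp only [Nat.add_sub_cancel]
    rw [show m + 1 + 1 = m + 2 from rfl, alpha_succ a b (m+1), alpha_succ a b m,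
        beta_succ a b (m+1), beta_succ a b m]
    field_simp
    ring

/-- Under (A0), if the speed set 𝒱 is non-empty then v0 ∈ 𝒱 and v0 = inf 𝒱. -/
theorem stmt3 (a b : ℕ → ℝ) (ha : ∀ k, 1 ≤ k → 0 < a k) (hb : ∀ k, 1 ≤ k → 0 < b k)
    (v0 : ℝ)
    (hv0 : Filter.Tendsto (fun k => alphaSeq a b k / betaSeq a b k) Filter.atTop (𝓝 (-v0)))
    (hne : (speedSet a b).Nonempty) :
    v0 ∈ speedSet a b ∧ v0 = sInf (speedSet a b) := by
  set α := alphaSeq a b with hα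
  set β := betaSeq a b with hβ
  set f : ℕ → ℝ := fun k => α k / β k with hf
  have hαp : ∀ k, 0 < α k := alpha_pos a b ha hb
  have hβp : ∀ k, 1 ≤ k → 0 < β k := beta_pos a b ha hb
  -- f is strictly decreasing for k ≥ 1
  have hdec : ∀ k, 1 ≤ k → f (k+1) < f k := by
    intro k hk
    have hA := hαp k
    have hB := hβp k hk
    have hq : 0 < a (k+1) / b (k+1) := div_pos (ha _ (by omega)) (hb _ (by omega))
    have hak : 0 < a (k+1) := ha _ (by omega)
    have hbk : 0 < b (k+1) := hb _ (by omega)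
    have hib : 0 < 1 / b (k+1) := by positivity
    have hB2 : 0 < β k * (a (k+1) / b (k+1)) + 1 / b (k+1) := by positivity
    show α (k+1) / β (k+1) < α k / β k
    rw [hα, hβ, alpha_succ, beta_succ, ← hα, ← hβ, div_lt_div_iff₀ hB2 hB]
    nlinarith [mul_pos hA hib]
  -- each f k (k ≥ 1) is ≥ the limit
  have hlim_le : ∀ k, 1 ≤ k → -v0 ≤ f k := by
    intro k hk
    refine le_of_tendsto hv0 (Filter.eventually_atTop.2 ⟨k, ?_⟩)
    intro n hn
    obtain ⟨m, rfl⟩ : ∃ m, n = k + m := ⟨n - k, by omega⟩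
    clear hn
    induction m with
    | zero => simp
    | succ p ih =>
      exact le_trans (le_of_lt (hdec (k+p) (by omega))) ih
  have hstrict : ∀ k, 1 ≤ k → -v0 < f k := by
    intro k hk
    exact lt_of_le_of_lt (hlim_le (k+1) (by omega)) (hdec k hk)
  -- every v ∈ 𝒱 satisfies v0 ≤ v
  have hlb : ∀ v ∈ speedSet a b, v0 ≤ v := by
    intro v hv
    have key : ∀ k, 1 ≤ k → -v ≤ f k := by
      intro k hk
      have h1 : 0 < α k + v * β k := (hv.2 k hk).1
      have hB := hβp k hk
      rw [hf, le_div_iff₀ hB]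
      nlinarith
    have : -v ≤ -v0 := ge_of_tendsto hv0 (Filter.eventually_atTop.2 ⟨1, fun n hn => key n hn⟩)
    linarith
  have hmem : v0 ∈ speedSet a b := by
    obtain ⟨v, hv⟩ := hne
    have hvv0 : v0 ≤ v := hlb v hv
    refine ⟨ste_any a b hb v0, ?_⟩
    intro k hk
    have hB := hβp k hk
    constructor
    · have := hstrict k hk
      rw [hf, lt_div_iff₀ hB] at this
      dsimp only
      nlinarith
    · have h1 : α k + v * β k < 1 := (hv.2 k hk).2
      dsimp only
      nlinarith
  exact ⟨hmem, le_antisymm (le_csInf hne hlb) (csInf_le ⟨v0, hlb⟩ hmem)⟩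
end

section
/- Assume (A0) and assumption (A1): Σ_{k≥1} 1/a_k = ∞. Then either 𝒱 has at most one element, or v_0 = 0. -/
open Finset Filter Topology MeasureTheory
open scoped ENNReal

/-!
Writing `β_k = α_k S_k` with `S_k = ∑_{j<k} 1/(a_{j+1} α_j)`, we get `α_k/β_k = 1/S_k`.
If `v ≠ w` both lie in `𝒱`, then `(v - w) β_k` is a difference of two numbers in `(0,1)`,
so `β` is bounded, hence so is `α = ρ - v β`, say by `A`. Then `S_k ≥ (∑_{j≤k} 1/a_j)/A → ∞`
by (A1), so `α_k/β_k → 0`, i.e. `v₀ = 0`.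
-/

variable {a b : ℕ → ℝ}

@[simp]
lemma alphaSeq_zero : alphaSeq a b 0 = 1 := by
  simp [alphaSeq]

@[simp]
lemma betaSeq_zero : betaSeq a b 0 = 0 := by
  simp [betaSeq]

lemma alphaSeq_succ (k : ℕ) : alphaSeq a b (k + 1) = alphaSeq a b k * (a (k + 1) / b (k + 1)) :=
  prod_Icc_succ_top (by omega) _

lemma betaSeq_succ (k : ℕ) :
    betaSeq a b (k + 1) = (1 + a (k + 1) * betaSeq a b k) / b (k + 1) := by
  have hterm : ∀ j ∈ Icc 1 k,
      (∏ i ∈ Icc (j + 1) (k + 1), a i) / (∏ i ∈ Icc j (k + 1), b i)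
        = a (k + 1) / b (k + 1) * ((∏ i ∈ Icc (j + 1) k, a i) / (∏ i ∈ Icc j k, b i)) := by
    intro j hj
    rw [mem_Icc] at hj
    rw [prod_Icc_succ_top (by omega), prod_Icc_succ_top (by omega), mul_div_mul_comm,
      mul_comm]
  rw [betaSeq, sum_Icc_succ_top (by omega), sum_congr rfl hterm, ← mul_sum, ← betaSeq]
  simp only [Icc_eq_empty_of_lt (Nat.lt_succ_self _), prod_empty, Icc_self, prod_singleton]
  ring

lemma alphaSeq_ne_zero (ha : ∀ k, 1 ≤ k → a k ≠ 0) (hb : ∀ k, 1 ≤ k → b k ≠ 0) (k : ℕ) :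
    alphaSeq a b k ≠ 0 :=
  prod_ne_zero_iff.2 fun i hi => div_ne_zero (ha i (mem_Icc.1 hi).1) (hb i (mem_Icc.1 hi).1)

lemma alphaSeq_pos (ha : ∀ k, 1 ≤ k → 0 < a k) (hb : ∀ k, 1 ≤ k → 0 < b k) (k : ℕ) :
    0 < alphaSeq a b k :=
  prod_pos fun i hi => div_pos (ha i (mem_Icc.1 hi).1) (hb i (mem_Icc.1 hi).1)

lemma betaSeq_eq_alphaSeq_mul_sum (ha : ∀ k, 1 ≤ k → a k ≠ 0) (hb : ∀ k, 1 ≤ k → b k ≠ 0)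
    (k : ℕ) :
    betaSeq a b k = alphaSeq a b k * ∑ j ∈ range k, 1 / (a (j + 1) * alphaSeq a b j) := by
  induction k with
  | zero => simp
  | succ k ih =>
    have hak := ha (k + 1) k.succ_pos
    have hbk := hb (k + 1) k.succ_pos
    have hαk := alphaSeq_ne_zero ha hb k
    rw [betaSeq_succ, alphaSeq_succ, sum_range_succ, ih]
    field_simp
    ring

lemma betaSeq_nonneg (ha : ∀ k, 1 ≤ k → 0 < a k) (hb : ∀ k, 1 ≤ k → 0 < b k) (k : ℕ) :
    0 ≤ betaSeq a b k := by
  rw [betaSeq_eq_alphaSeq_mul_sum (fun k hk => (ha k hk).ne') (fun k hk => (hb k hk).ne')]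
  refine mul_nonneg (alphaSeq_pos ha hb k).le (sum_nonneg fun j _ => ?_)
  have := ha (j + 1) j.succ_pos
  have := alphaSeq_pos ha hb j
  positivity

lemma le_of_add_mul_mem_Ioo {x y v w : ℝ} (hy : 0 ≤ y) (hvw : v ≠ w)
    (hv : x + v * y ∈ Set.Ioo 0 1) (hw : x + w * y ∈ Set.Ioo 0 1) :
    x ≤ 1 + |v| / |v - w| := by
  have hvw' : 0 < |v - w| := abs_pos.2 (sub_ne_zero.2 hvw)
  have hdiff : |v - w| * y ≤ 1 := by
    have : |(v - w) * y| < 1 := by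
      rw [abs_lt]; constructor <;> linarith [hv.1, hv.2, hw.1, hw.2]
    rw [abs_mul, abs_of_nonneg hy] at this
    exact this.le
  have hy_le : y ≤ 1 / |v - w| := by rw [le_div_iff₀ hvw']; linarith
  calc x ≤ 1 + |v| * y := by nlinarith [neg_abs_le v, hv.2]
    _ ≤ 1 + |v| * (1 / |v - w|) := by gcongr
    _ = 1 + |v| / |v - w| := by ring

lemma alphaSeq_le_of_mem_speedSet (ha : ∀ k, 1 ≤ k → 0 < a k) (hb : ∀ k, 1 ≤ k → 0 < b k)
    {v w : ℝ} (hv : v ∈ speedSet a b) (hw : w ∈ speedSet a b) (hvw : v ≠ w) (k : ℕ) :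
    alphaSeq a b k ≤ 1 + |v| / |v - w| := by
  rcases Nat.eq_zero_or_pos k with rfl | hk
  · simp only [alphaSeq_zero, le_add_iff_nonneg_right]
    positivity
  · exact le_of_add_mul_mem_Ioo (betaSeq_nonneg ha hb k) hvw (hv.2 k hk) (hw.2 k hk)

lemma tendsto_alphaSeq_div_betaSeq_zero (ha : ∀ k, 1 ≤ k → 0 < a k)
    (hb : ∀ k, 1 ≤ k → 0 < b k) (hA1 : ¬ Summable (fun k : ℕ => 1 / a (k + 1)))
    {A : ℝ} (hαA : ∀ k, alphaSeq a b k ≤ A) :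
    Tendsto (fun k => alphaSeq a b k / betaSeq a b k) atTop (𝓝 0) := by
  set S : ℕ → ℝ := fun k => ∑ j ∈ range k, 1 / (a (j + 1) * alphaSeq a b j)
  have hA : 0 < A := (alphaSeq_pos ha hb 0).trans_le (hαA 0)
  have hratio : (fun k => alphaSeq a b k / betaSeq a b k) = S⁻¹ := by
    ext k
    rw [betaSeq_eq_alphaSeq_mul_sum (fun k hk => (ha k hk).ne') (fun k hk => (hb k hk).ne'),
      div_mul_cancel_left₀ (alphaSeq_pos ha hb k).ne', Pi.inv_apply]
  have hT : Tendsto (fun k => (∑ j ∈ range k, 1 / a (j + 1)) / A) atTop atTop :=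
    ((not_summable_iff_tendsto_nat_atTop_of_nonneg
      fun j => (one_div_pos.2 (ha (j + 1) j.succ_pos)).le).1 hA1).atTop_div_const hA
  have hTS : ∀ k, (∑ j ∈ range k, 1 / a (j + 1)) / A ≤ S k := by
    intro k
    rw [sum_div]
    refine sum_le_sum fun j _ => ?_
    have := ha (j + 1) j.succ_pos
    have := alphaSeq_pos ha hb j
    rw [div_div]
    gcongr
    exact hαA j
  rw [hratio]
  exact (tendsto_atTop_mono hTS hT).inv_tendsto_atTop

/-- Under (A0) and (A1) (the series of 1/a_k diverges), either 𝒱 has at most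
one element, or v0 = 0. -/
theorem stmt8 (a b : ℕ → ℝ) (ha : ∀ k, 1 ≤ k → 0 < a k) (hb : ∀ k, 1 ≤ k → 0 < b k)
    (hA1 : ¬ Summable (fun k : ℕ => 1 / a (k+1)))
    (v0 : ℝ)
    (hv0 : Filter.Tendsto (fun k => alphaSeq a b k / betaSeq a b k) Filter.atTop (𝓝 (-v0))) :
    (speedSet a b).Subsingleton ∨ v0 = 0 := by
  refine or_iff_not_imp_left.2 fun hV => ?_
  obtain ⟨v, hv, w, hw, hvw⟩ := Set.not_subsingleton_iff.1 hV
  have hzero := tendsto_alphaSeq_div_betaSeq_zero ha hb hA1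
    (alphaSeq_le_of_mem_speedSet ha hb hv hw hvw)
  simpa using tendsto_nhds_unique hv0 hzero
end
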